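/- Let M be a rank-r lattice path matroid with r ≥ 3. If M is vertically 3-connected, then M has a minor isomorphic to the uniform matroid U_{r,r+2}. -/

import Mathlib

open Set Matroid

variable {α : Type*}

/-- `N` is a transversal presentation of the matroid `M`: the independent sets of `M` are
exactly the partial transversals of the family `N`, i.e. the subsets of the ground set
admitting an injection `φ` into the index set with `x ∈ N (φ x)` for all `x`. -/
def IsTransversalPresentation (M : Matroid α) {r : ℕ} (N : Fin r → Set α) : Prop :=
  (∀ i, N i ⊆ M.E) ∧
    ∀ I : Set α, M.Indep I ↔
      I ⊆ M.E ∧ ∃ φ : I → Fin r, Function.Injective φ ∧ ∀ x : I, (x : α) ∈ N (φ x)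

/-- A matroid is bicircular if it has a transversal presentation in which every set of the
presentation has at most two elements. -/
def Bicircular (M : Matroid α) : Prop :=
  ∃ (r : ℕ) (N : Fin r → Set α), IsTransversalPresentation M N ∧ ∀ i, (N i).encard ≤ 2

/-- `M` is a matroid on ground set `{1, …, m + r}` with a standard (lattice path)
presentation consisting of the intervals `[l i, u i]`, where the lower endpoints and the
upper endpoints each form strictly increasing chains. -/
def IsStandardPresentation (M : Matroid ℕ) (m : ℕ) {r : ℕ} (l u : Fin r → ℕ) : Prop :=
  M.E = Set.Icc 1 (m + r) ∧ StrictMono l ∧ StrictMono u ∧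
    (∀ i, 1 ≤ l i ∧ l i ≤ u i ∧ u i ≤ m + r) ∧
    IsTransversalPresentation M (fun i => Set.Icc (l i) (u i))

/-- A matroid is a lattice path matroid if it is isomorphic (via a bijection `g` of ground
sets) to a transversal matroid on `{1, …, m + r}` whose presentation consists of intervals
`[l i, u i]` with both endpoint sequences strictly increasing. -/
def LatticePath (M : Matroid α) : Prop :=
  ∃ (r m : ℕ) (g : ℕ → α) (l u : Fin r → ℕ),
    Set.InjOn g (Set.Icc 1 (m + r)) ∧ g '' Set.Icc 1 (m + r) = M.E ∧
    StrictMono l ∧ StrictMono u ∧ (∀ i, 1 ≤ l i ∧ l i ≤ u i ∧ u i ≤ m + r) ∧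
    IsTransversalPresentation M (fun i => g '' Set.Icc (l i) (u i))

/-- The class of matroids that are both bicircular and lattice path. -/
def BicircLP (M : Matroid α) : Prop := Bicircular M ∧ LatticePath M

/-- Deletion of the set `D` from the matroid `M`. -/
def MDel (M : Matroid α) (D : Set α) : Matroid α := M ↾ (M.E \ D)

/-- Contraction of the set `C` in the matroid `M`. -/
def MCon (M : Matroid α) (C : Set α) : Matroid α := (M✶ ↾ (M.E \ C))✶

/-- `N` is a minor of `M`: it is obtained from `M` by contracting a set and deleting a set. -/
def IsMinorOf (N M : Matroid α) : Prop :=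
  ∃ C D : Set α, C ⊆ M.E ∧ D ⊆ M.E ∧ Disjoint C D ∧ N = MDel (MCon M C) D

/-- `N` is a proper minor of `M`: a minor on a proper subset of the ground set. -/
def IsProperMinorOf (N M : Matroid α) : Prop := IsMinorOf N M ∧ N.E ⊂ M.E

/-- `M` is an excluded minor for the class `𝒞`: `M` is not in `𝒞`, but every proper minor
of `M` is in `𝒞`. -/
def IsExcludedMinor (𝒞 : Matroid α → Prop) (M : Matroid α) : Prop :=
  ¬ 𝒞 M ∧ ∀ N : Matroid α, IsProperMinorOf N M → 𝒞 N

/-- The rank of the set `X` in `M`: the supremum of the cardinalities of independent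
subsets of `X`. -/
noncomputable def eRk₀ (M : Matroid α) (X : Set α) : ℕ∞ :=
  ⨆ I : {I : Set α // M.Indep I ∧ I ⊆ X}, (I : Set α).encard

/-- The rank of the matroid `M`. -/
noncomputable def eRank₀ (M : Matroid α) : ℕ∞ := eRk₀ M M.E

/-- `M` is vertically 3-connected: it has no vertical `k`-separation for `k < 3`, i.e. no
partition `(A, B)` of the ground set with `|A| ≥ k`, `|B| ≥ k`, `r A ≥ k`, `r B ≥ k` and
`r A + r B - r M < k`. -/
def VerticallyThreeConnected (M : Matroid α) : Prop :=
  ∀ k : ℕ, 0 < k → k < 3 → ∀ A B : Set α, A ∪ B = M.E → Disjoint A B →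
    ¬ ((k : ℕ∞) ≤ A.encard ∧ (k : ℕ∞) ≤ B.encard ∧ (k : ℕ∞) ≤ eRk₀ M A ∧
        (k : ℕ∞) ≤ eRk₀ M B ∧ eRk₀ M A + eRk₀ M B < eRank₀ M + (k : ℕ∞))

/-- A circuit of a matroid: a minimal dependent set. -/
def IsCircuit (M : Matroid α) (C : Set α) : Prop :=
  M.Dep C ∧ ∀ D : Set α, D ⊂ C → M.Indep D

/-- `P` is a parallel class of `M`: a maximal set of pairwise parallel non-loop elements. -/
def IsParallelClass (M : Matroid α) (P : Set α) : Prop :=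
  P.Nonempty ∧ P ⊆ M.E ∧ (∀ a ∈ P, M.Indep {a}) ∧
    (∀ a ∈ P, ∀ b ∈ P, a ≠ b → ¬ M.Indep {a, b}) ∧
    ∀ c ∈ M.E, M.Indep {c} → (∀ a ∈ P, a ≠ c → ¬ M.Indep {a, c}) → c ∈ P

/-- `M` is isomorphic to the uniform matroid `U_{a,b}`: its ground set has `b` elements and
its independent sets are the subsets of the ground set with at most `a` elements. -/
def IsUnifIso (a b : ℕ) (M : Matroid α) : Prop :=
  M.E.encard = (b : ℕ∞) ∧ ∀ I : Set α, M.Indep I ↔ I ⊆ M.E ∧ I.encard ≤ (a : ℕ∞)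

/-- `M` is the direct sum of `M₁` and `M₂` (which have disjoint ground sets). -/
def IsDirectSumOf (M M₁ M₂ : Matroid α) : Prop :=
  Disjoint M₁.E M₂.E ∧ M.E = M₁.E ∪ M₂.E ∧
    ∀ I : Set α, M.Indep I ↔ I ⊆ M.E ∧ M₁.Indep (I ∩ M₁.E) ∧ M₂.Indep (I ∩ M₂.E)

/-- `M` is the truncation `T_n(M₀)` to rank `n` of the matroid `M₀` (of rank at least `n`):
its independent sets are the independent sets of `M₀` with at most `n` elements. -/
def IsTruncationOf (n : ℕ) (M₀ M : Matroid α) : Prop :=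
  (n : ℕ∞) ≤ eRank₀ M₀ ∧ M.E = M₀.E ∧
    ∀ I : Set α, M.Indep I ↔ M₀.Indep I ∧ I.encard ≤ (n : ℕ∞)

/-- `M` is the free extension `M₀ + x` of `M₀` by the new element `x`: its independent sets
are the independent sets `I` of `M₀`, together with the sets `I ∪ {x}` for `I` independent
in `M₀` with `|I| ≤ r(M₀) - 1`. -/
def IsFreeExtOf (M₀ M : Matroid α) (x : α) : Prop :=
  x ∉ M₀.E ∧ M.E = insert x M₀.E ∧
    ∀ I : Set α, M.Indep I ↔
      ((x ∉ I ∧ M₀.Indep I) ∨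
        (x ∈ I ∧ M₀.Indep (I \ {x}) ∧ (I \ {x}).encard + 1 ≤ eRank₀ M₀))

/-- `M` is isomorphic to `T_3(U_{1,2} ⊕ U_{3,5})`. -/
def IsT3U12U35 (M : Matroid α) : Prop :=
  ∃ M₁ M₂ M₀ : Matroid α, IsUnifIso 1 2 M₁ ∧ IsUnifIso 3 5 M₂ ∧ IsDirectSumOf M₀ M₁ M₂ ∧
    IsTruncationOf 3 M₀ M

/-- `M` is isomorphic to `T_3(U_{1,2} ⊕ U_{1,2} ⊕ U_{3,3})`. -/
def IsT3U12U12U33 (M : Matroid α) : Prop :=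
  ∃ M₁ M₂ M₃ M₁₂ M₀ : Matroid α, IsUnifIso 1 2 M₁ ∧ IsUnifIso 1 2 M₂ ∧ IsUnifIso 3 3 M₃ ∧
    IsDirectSumOf M₁₂ M₁ M₂ ∧ IsDirectSumOf M₀ M₁₂ M₃ ∧ IsTruncationOf 3 M₀ M

/-- `M` is isomorphic to `T_4(U_{1,2} ⊕ U_{4,5})`. -/
def IsT4U12U45 (M : Matroid α) : Prop :=
  ∃ M₁ M₂ M₀ : Matroid α, IsUnifIso 1 2 M₁ ∧ IsUnifIso 4 5 M₂ ∧ IsDirectSumOf M₀ M₁ M₂ ∧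
    IsTruncationOf 4 M₀ M

/-- `M` is isomorphic to `T_4(U_{3,4} ⊕ U_{3,3})`. -/
def IsT4U34U33 (M : Matroid α) : Prop :=
  ∃ M₁ M₂ M₀ : Matroid α, IsUnifIso 3 4 M₁ ∧ IsUnifIso 3 3 M₂ ∧ IsDirectSumOf M₀ M₁ M₂ ∧
    IsTruncationOf 4 M₀ M

/-- `M` is isomorphic to `P_n = T_n(U_{n-1,n} ⊕ U_{n-1,n})`. -/
def IsP (n : ℕ) (M : Matroid α) : Prop :=
  ∃ M₁ M₂ M₀ : Matroid α, IsUnifIso (n - 1) n M₁ ∧ IsUnifIso (n - 1) n M₂ ∧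
    IsDirectSumOf M₀ M₁ M₂ ∧ IsTruncationOf n M₀ M

/-- `M` is isomorphic to `P_n' = (P_{n-1}✶ + e)✶`, the free coextension of `P_{n-1}`. -/
def IsP' (n : ℕ) (M : Matroid α) : Prop :=
  ∃ (N : Matroid α) (e : α), IsP (n - 1) N ∧ IsFreeExtOf N✶ M✶ e

/-- `M` is isomorphic to `A_n = P_n' + x`. -/
def IsA (n : ℕ) (M : Matroid α) : Prop :=
  ∃ (N : Matroid α) (x : α), IsP' n N ∧ IsFreeExtOf N M x

/-- `M` is isomorphic to `B_{n,k} = T_n(U_{n-1,n} ⊕ U_{n-1,n} ⊕ U_{k-1,k})`. -/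
def IsB (n k : ℕ) (M : Matroid α) : Prop :=
  ∃ M₁ M₂ M₃ M₁₂ M₀ : Matroid α, IsUnifIso (n - 1) n M₁ ∧ IsUnifIso (n - 1) n M₂ ∧
    IsUnifIso (k - 1) k M₃ ∧ IsDirectSumOf M₁₂ M₁ M₂ ∧ IsDirectSumOf M₀ M₁₂ M₃ ∧
    IsTruncationOf n M₀ M

/-- `M` is isomorphic to `C_{n+k,k} = B_{n,k}✶`. -/
def IsC (n k : ℕ) (M : Matroid α) : Prop := IsB n k M✶

/-- `M` is isomorphic to `D_n = (P_{n-1} ⊕ U_{1,1}) + x`. -/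
def IsD (n : ℕ) (M : Matroid α) : Prop :=
  ∃ (P U S : Matroid α) (x : α), IsP (n - 1) P ∧ IsUnifIso 1 1 U ∧ IsDirectSumOf S P U ∧
    IsFreeExtOf S M x

/-- `M` is isomorphic to `E_n = D_n✶`. -/
def IsE (n : ℕ) (M : Matroid α) : Prop := IsD n M✶

/-- `M` is isomorphic to the rank-3 whirl `𝒲³`, the transversal matroid on `{1, …, 6}` with
presentation `({1,3,4}, {1,2,5}, {2,3,6})`. -/
def IsWhirl3 (M : Matroid α) : Prop :=
  ∃ g : ℕ → α, Set.InjOn g (Set.Icc 1 6) ∧ g '' Set.Icc 1 6 = M.E ∧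
    IsTransversalPresentation M ![g '' {1, 3, 4}, g '' {1, 2, 5}, g '' {2, 3, 6}]

/-- `M` is isomorphic to `R₃`, the transversal matroid on `{1, …, 7}` with presentation
`({1,2}, {1,3,4,5}, {2,3,6,7})`. -/
def IsR3 (M : Matroid α) : Prop :=
  ∃ g : ℕ → α, Set.InjOn g (Set.Icc 1 7) ∧ g '' Set.Icc 1 7 = M.E ∧
    IsTransversalPresentation M ![g '' {1, 2}, g '' {1, 3, 4, 5}, g '' {2, 3, 6, 7}]

/-- `M` is isomorphic to `R₄`, the transversal matroid on `{1, …, 7}` with presentation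
`({1,2}, {1,3,4,5}, {2,3,6,7}, {6,7})`. -/
def IsR4 (M : Matroid α) : Prop :=
  ∃ g : ℕ → α, Set.InjOn g (Set.Icc 1 7) ∧ g '' Set.Icc 1 7 = M.E ∧
    IsTransversalPresentation M
      ![g '' {1, 2}, g '' {1, 3, 4, 5}, g '' {2, 3, 6, 7}, g '' {6, 7}]

/-- `M` is isomorphic to the rank-3 wheel `𝒲₃`, the cycle matroid of `K₄`: the elements
correspond bijectively to the edges of the complete graph on four vertices, and a set is
independent if and only if the corresponding edge set is acyclic. -/
def IsWheel3 (M : Matroid α) : Prop :=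
  ∃ f : α → Sym2 (Fin 4),
    Set.InjOn f M.E ∧ (∀ x ∈ M.E, ¬ (f x).IsDiag) ∧
    (∀ p : Sym2 (Fin 4), ¬ p.IsDiag → ∃ x ∈ M.E, f x = p) ∧
    ∀ I : Set α, M.Indep I ↔ I ⊆ M.E ∧ (SimpleGraph.fromEdgeSet (f '' I)).IsAcyclic

/-!
Present `M` by intervals `[l i, u i]` on `{1, …, m + r}`. The initial segment `{1, …, t}` and
its complement have ranks `#{i | l i ≤ t}` and `#{i | t < u i}`, so the cut after `t` is a
vertical `k`-separation as soon as fewer than `k` intervals straddle it while both sides have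
rank at least `k`. Vertical 3-connectivity therefore forces consecutive intervals to share two
elements, `l (i + 1) < u i`, and intervals two apart to meet, `l (i + 2) ≤ u i`. Hence the
`s`-th of the `r + 2` elements `l 0 < ⋯ < l (r - 1) < l (r - 1) + 1 < l (r - 1) + 2` lies in
every interval `i` with `s - 2 ≤ i ≤ s`, any `r` of these elements can be matched to distinct
intervals, and so they span a restriction isomorphic to `U_{r, r+2}`.
-/

lemma eRk₀_le_encard (M : Matroid α) (X : Set α) : eRk₀ M X ≤ X.encard :=
  iSup_le fun I => encard_mono I.2.2

lemma isMinorOf_restrict {M : Matroid α} {X : Set α} (hX : X ⊆ M.E) : IsMinorOf (M ↾ X) M := by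
  have hcon : MCon M ∅ = M := by
    rw [MCon, sdiff_empty, ← dual_ground, restrict_ground_eq_self, dual_dual]
  exact ⟨∅, M.E \ X, empty_subset _, sdiff_subset, empty_disjoint _, by
    rw [hcon, MDel, sdiff_sdiff_cancel_left hX]⟩

lemma Fin.encard_setOf_val_lt {r n : ℕ} (hn : n ≤ r) :
    {i : Fin r | (i : ℕ) < n}.encard = n := by
  classical
  rw [← Finset.coe_filter_univ, encard_coe_eq_coe_finsetCard, Fin.card_filter_val_lt,
    min_eq_right hn]

lemma Fin.encard_setOf_le_val {r n : ℕ} (hn : n ≤ r) :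
    {i : Fin r | n ≤ (i : ℕ)}.encard = (r - n : ℕ) := by
  have h := encard_add_encard_compl {i : Fin r | (i : ℕ) < n}
  simp only [compl_ofPred, not_lt, encard_univ, ENat.card_eq_coe_fintype_card, Fintype.card_fin,
    Fin.encard_setOf_val_lt hn] at h
  obtain ⟨k, hk⟩ :=
    ENat.ne_top_iff_exists.mp (toFinite {i : Fin r | n ≤ (i : ℕ)}).encard_lt_top.ne
  rw [← hk] at h ⊢
  norm_cast at h ⊢
  omega

lemma Monotone.le_iff_val_lt {r : ℕ} {f : Fin r → ℕ} (hf : Monotone f) {t a : ℕ} (ha : a ≤ r)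
    (hbelow : ∀ i : Fin r, (i : ℕ) + 1 = a → f i ≤ t)
    (habove : ∀ i : Fin r, (i : ℕ) = a → t < f i) (i : Fin r) :
    f i ≤ t ↔ (i : ℕ) < a := by
  constructor
  · intro hi
    by_contra! hai
    have := habove ⟨a, by omega⟩ rfl
    have := hf (show (⟨a, by omega⟩ : Fin r) ≤ i from Fin.le_def.2 hai)
    omega
  · intro hia
    have := hbelow ⟨a - 1, by omega⟩ (by simp only; omega)
    have := hf (show i ≤ (⟨a - 1, by omega⟩ : Fin r) from Fin.le_def.2 (by simp only; omega))
    omega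

namespace IsTransversalPresentation

variable {M : Matroid α} {r : ℕ} {N : Fin r → Set α}

lemma encard_le_of_indep (hN : IsTransversalPresentation M N) {I X : Set α} (hI : M.Indep I)
    (hIX : I ⊆ X) : I.encard ≤ {i | (N i ∩ X).Nonempty}.encard := by
  obtain ⟨-, φ, hφ, hφN⟩ := (hN.2 I).1 hI
  exact ENat.card_le_card_of_injective (f := fun x => ⟨φ x, x, hφN x, hIX x.2⟩)
    fun x y hxy => hφ (congrArg Subtype.val hxy)

lemma indep_image (hN : IsTransversalPresentation M N) {β : Type*} {S : Set β} {x : β → α}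
    {φ : β → Fin r} (hφ : InjOn φ S) (hxN : ∀ s ∈ S, x s ∈ N (φ s)) : M.Indep (x '' S) := by
  have hpre : ∀ y : ↥(x '' S), ∃ s ∈ S, x s = y := fun y => y.2
  choose σ hσS hσ using hpre
  rw [hN.2]
  refine ⟨?_, fun y => φ (σ y), fun y z h => ?_, fun y => hσ y ▸ hxN _ (hσS y)⟩
  · rintro _ ⟨s, hs, rfl⟩
    exact hN.1 _ (hxN s hs)
  · rw [Subtype.ext_iff, ← hσ y, ← hσ z, hφ (hσS y) (hσS z) h]

lemma eRk₀_eq (hN : IsTransversalPresentation M N) {X : Set α} {S : Set (Fin r)}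
    (hS : ∀ i, (N i ∩ X).Nonempty ↔ i ∈ S) {c : Fin r → α} (hc : ∀ i ∈ S, c i ∈ N i ∩ X)
    (hcS : InjOn c S) : eRk₀ M X = S.encard := by
  have hS' : {i | (N i ∩ X).Nonempty} = S := Set.ext hS
  refine le_antisymm (iSup_le fun I => hS' ▸ hN.encard_le_of_indep I.2.1 I.2.2) ?_
  have hind : M.Indep (c '' S) := hN.indep_image (injOn_id S) fun i hi => (hc i hi).1
  refine le_iSup_of_le ⟨c '' S, hind, image_subset_iff.2 fun i hi => (hc i hi).2⟩ ?_
  exact hcS.encard_image.ge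

lemma encard_le (hN : IsTransversalPresentation M N) {I : Set α} (hI : M.Indep I) :
    I.encard ≤ r :=
  (hN.encard_le_of_indep hI (subset_univ I)).trans <| by
    simpa using encard_le_card (s := {i | (N i ∩ univ).Nonempty})

/-- Among `r + 2` elements, any `r` of them omit two positions `p < q`; sliding the positions
above `p` down by one and those above `q` by one more matches them to distinct sets. -/
theorem isUnifIso_restrict_range (hN : IsTransversalPresentation M N) {x : Fin (r + 2) → α}
    (hx : Function.Injective x)
    (hxN : ∀ (i : Fin r) (s : Fin (r + 2)), (i : ℕ) ≤ s → (s : ℕ) ≤ i + 2 → x s ∈ N i) :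
    IsUnifIso r (r + 2) (M ↾ range x) := by
  refine ⟨by simp [← image_univ, hx.encard_image], fun I => ?_⟩
  rw [restrict_indep_iff]
  refine ⟨fun ⟨hI, hIx⟩ => ⟨hIx, hN.encard_le hI⟩, fun ⟨hIx, hIr⟩ => ⟨?_, hIx⟩⟩
  obtain ⟨S, rfl⟩ := subset_range_iff_exists_image_eq.1 hIx
  rw [hx.encard_image] at hIr
  obtain ⟨k, hk⟩ := ENat.ne_top_iff_exists.mp (toFinite S).encard_lt_top.ne
  obtain ⟨k', hk'⟩ := ENat.ne_top_iff_exists.mp (toFinite Sᶜ).encard_lt_top.ne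
  have hcard := encard_add_encard_compl S
  rw [← hk, ← hk', encard_univ, ENat.card_eq_coe_fintype_card, Fintype.card_fin] at hcard
  rw [← hk] at hIr
  norm_cast at hcard hIr
  obtain ⟨p, q, hpq, hp, hq⟩ : ∃ p q, p < q ∧ p ∉ S ∧ q ∉ S := by
    obtain ⟨a, b, ha, hb, hab⟩ := one_lt_encard_iff.1 (show 1 < Sᶜ.encard by
      rw [← hk']; norm_cast; omega)
    rcases hab.lt_or_gt with h | h
    exacts [⟨a, b, h, ha, hb⟩, ⟨b, a, h, hb, ha⟩]
  rcases Nat.eq_zero_or_pos r with rfl | hr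
  · obtain rfl : S = ∅ := encard_eq_zero.1 (by rw [← hk]; norm_cast; omega)
    simp
  have hpq' := Fin.lt_def.1 hpq
  have hq' := q.isLt
  let φ : Fin (r + 2) → Fin r := fun s =>
    ⟨if (s : ℕ) < p then s else if (s : ℕ) < q then s - 1 else s - 2, by
      have := s.isLt; split_ifs <;> omega⟩
  refine hN.indep_image (φ := φ) (fun s hs s' hs' h => Fin.ext ?_)
    (fun s hs => hxN _ _ ?_ ?_)
  · have hsp := Fin.val_ne_iff.2 (ne_of_mem_of_not_mem hs hp)
    have hsq := Fin.val_ne_iff.2 (ne_of_mem_of_not_mem hs hq)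
    have hs'p := Fin.val_ne_iff.2 (ne_of_mem_of_not_mem hs' hp)
    have hs'q := Fin.val_ne_iff.2 (ne_of_mem_of_not_mem hs' hq)
    simp only [φ, Fin.mk.injEq] at h
    split_ifs at h <;> omega
  all_goals simp only [φ]; split_ifs <;> omega

end IsTransversalPresentation

lemma exists_strictMono_mem_Icc {r : ℕ} {l u : Fin r → ℕ} (hr : 2 ≤ r) (hl : StrictMono l)
    (hu : StrictMono u) (h₁ : ∀ i j : Fin r, (j : ℕ) = i + 1 → l j < u i)
    (h₂ : ∀ i k : Fin r, (k : ℕ) = i + 2 → l k ≤ u i) :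
    ∃ e : Fin (r + 2) → ℕ, StrictMono e ∧
      ∀ (i : Fin r) (s : Fin (r + 2)), (i : ℕ) ≤ s → (s : ℕ) ≤ i + 2 → e s ∈ Icc (l i) (u i) := by
  -- `l 0 < ⋯ < l (r - 1) < l (r - 1) + 1 < l (r - 1) + 2`
  let e : Fin (r + 2) → ℕ := fun s => l ⟨min s (r - 1), by omega⟩ + (s - (r - 1))
  have he : StrictMono e := by
    intro s s' hss'
    have := Fin.lt_def.1 hss'
    by_cases hs' : (s' : ℕ) ≤ r - 1
    · have := hl (show (⟨min s (r - 1), by omega⟩ : Fin r) < ⟨min s' (r - 1), by omega⟩ from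
        Fin.lt_def.2 (by simp only; omega))
      simp only [e]; omega
    · have := hl.monotone (show (⟨min s (r - 1), by omega⟩ : Fin r) ≤ ⟨min s' (r - 1), by omega⟩
        from Fin.le_def.2 (by simp only; omega))
      simp only [e]; omega
  have hlow : ∀ (i : Fin r) (s : Fin (r + 2)), (i : ℕ) ≤ s → l i ≤ e s := fun i s his => by
    have := hl.monotone
      (show i ≤ ⟨min s (r - 1), by omega⟩ from Fin.le_def.2 (by simp only; omega))
    simp only [e]; omega
  have hup : ∀ i : Fin r, e ⟨i + 2, by omega⟩ ≤ u i := fun i => by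
    simp only [e]
    rcases (show (i : ℕ) + 2 < r ∨ (i : ℕ) + 2 = r ∨ (i : ℕ) + 1 = r by omega) with h | h | h
    · have := h₂ i ⟨min (i + 2) (r - 1), by omega⟩ (by simp only; omega); omega
    · have := h₁ i ⟨min (i + 2) (r - 1), by omega⟩ (by simp only; omega); omega
    · have := h₁ ⟨r - 2, by omega⟩ ⟨min (i + 2) (r - 1), by omega⟩ (by simp only; omega)
      have := hu (show (⟨r - 2, by omega⟩ : Fin r) < i from Fin.lt_def.2 (by simp only; omega))
      omega
  exact ⟨e, he, fun i s his hsi =>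
    ⟨hlow i s his, (he.monotone (Fin.le_def.2 hsi)).trans (hup i)⟩⟩

/-- The witnesses of `LatticePath M`, bundled. -/
structure IsLatticePathPresentation (M : Matroid α) (m : ℕ) {r : ℕ} (g : ℕ → α)
    (l u : Fin r → ℕ) : Prop where
  injOn : InjOn g (Icc 1 (m + r))
  image_eq : g '' Icc 1 (m + r) = M.E
  lower_strictMono : StrictMono l
  upper_strictMono : StrictMono u
  bounds : ∀ i, 1 ≤ l i ∧ l i ≤ u i ∧ u i ≤ m + r
  presentation : IsTransversalPresentation M (fun i => g '' Icc (l i) (u i))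

namespace IsLatticePathPresentation

variable {M : Matroid α} {m r : ℕ} {g : ℕ → α} {l u : Fin r → ℕ}

lemma inter_nonempty_iff (P : IsLatticePathPresentation M m g l u) (i : Fin r) {a b : ℕ}
    (ha : 1 ≤ a) (hb : b ≤ m + r) :
    (g '' Icc (l i) (u i) ∩ g '' Icc a b).Nonempty ↔ l i ≤ b ∧ a ≤ u i ∧ a ≤ b := by
  have := P.bounds i
  rw [← P.injOn.image_inter (Icc_subset_Icc (by omega) (by omega))
    (Icc_subset_Icc ha hb), image_nonempty, Icc_inter_Icc, nonempty_Icc]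
  omega

lemma eRk₀_image_Icc_one (P : IsLatticePathPresentation M m g l u) {t : ℕ} (ht : t ≤ m + r) :
    eRk₀ M (g '' Icc 1 t) = {i | l i ≤ t}.encard := by
  refine P.presentation.eRk₀_eq (fun i => ?_) (c := g ∘ l) (fun i hi => ?_) ?_
  · have := P.bounds i
    rw [P.inter_nonempty_iff i le_rfl ht, mem_ofPred_eq]
    omega
  · have := P.bounds i
    exact ⟨mem_image_of_mem g ⟨le_rfl, this.2.1⟩, mem_image_of_mem g ⟨this.1, hi⟩⟩
  · refine P.injOn.comp P.lower_strictMono.injective.injOn fun i _ => ?_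
    have := P.bounds i
    exact ⟨this.1, by omega⟩

lemma eRk₀_image_Icc_succ (P : IsLatticePathPresentation M m g l u) (t : ℕ) :
    eRk₀ M (g '' Icc (t + 1) (m + r)) = {i | t < u i}.encard := by
  refine P.presentation.eRk₀_eq (fun i => ?_) (c := g ∘ u) (fun i hi => ?_) ?_
  · have := P.bounds i
    rw [P.inter_nonempty_iff i (by omega) le_rfl, mem_ofPred_eq]
    omega
  · have := P.bounds i
    exact ⟨mem_image_of_mem g ⟨this.2.1, le_rfl⟩, mem_image_of_mem g ⟨hi, this.2.2⟩⟩
  · refine P.injOn.comp P.upper_strictMono.injective.injOn fun i _ => ?_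
    have := P.bounds i
    exact ⟨by omega, this.2.2⟩

lemma eRank₀_eq (P : IsLatticePathPresentation M m g l u) : eRank₀ M = r := by
  rw [eRank₀, ← P.image_eq, P.eRk₀_image_Icc_one le_rfl]
  have hall : {i | l i ≤ m + r} = univ := eq_univ_of_forall fun i =>
    (P.bounds i).2.1.trans (P.bounds i).2.2
  simp [hall]

/-- The two sides of the cut after `t` have ranks `a` and `r - c`. -/
lemma not_verticallyThreeConnected_of_cut (P : IsLatticePathPresentation M m g l u)
    {t a c k : ℕ} (ht₀ : 1 ≤ t) (ht : t < m + r)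
    (ha : ∀ i, l i ≤ t ↔ (i : ℕ) < a) (hc : ∀ i, u i ≤ t ↔ (i : ℕ) < c)
    (hk₀ : 0 < k) (hk : k < 3) (hka : k ≤ a) (hck : c + k ≤ r) (hac : a < c + k) :
    ¬ VerticallyThreeConnected M := by
  intro h3
  have hrkA : eRk₀ M (g '' Icc 1 t) = a := by
    rw [P.eRk₀_image_Icc_one ht.le, show {i | l i ≤ t} = {i : Fin r | (i : ℕ) < a} from
      Set.ext ha, Fin.encard_setOf_val_lt (by omega)]
  have hrkB : eRk₀ M (g '' Icc (t + 1) (m + r)) = (r - c : ℕ) := by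
    have hB : ∀ i, t < u i ↔ c ≤ (i : ℕ) := fun i => by rw [← not_le, hc, not_lt]
    rw [P.eRk₀_image_Icc_succ, show {i | t < u i} = {i : Fin r | c ≤ (i : ℕ)} from
      Set.ext hB, Fin.encard_setOf_le_val (by omega)]
  refine h3 k hk₀ hk (g '' Icc 1 t) (g '' Icc (t + 1) (m + r)) ?_ ?_ ⟨?_, ?_, ?_, ?_, ?_⟩
  · have hU : Icc 1 t ∪ Icc (t + 1) (m + r) = Icc 1 (m + r) := by
      ext; simp only [mem_union, mem_Icc]; omega
    rw [← image_union, hU, P.image_eq]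
  · rw [disjoint_iff_inter_eq_empty, ← P.injOn.image_inter (Icc_subset_Icc le_rfl ht.le)
      (Icc_subset_Icc (by omega) le_rfl), Icc_inter_Icc, Icc_eq_empty (by omega), image_empty]
  · exact le_trans (by rw [hrkA]; exact_mod_cast hka) (eRk₀_le_encard M _)
  · exact le_trans (by rw [hrkB]; exact_mod_cast (by omega : k ≤ r - c)) (eRk₀_le_encard M _)
  · rw [hrkA]; exact_mod_cast hka
  · rw [hrkB]; exact_mod_cast (by omega : k ≤ r - c)
  · rw [hrkA, hrkB, P.eRank₀_eq]; exact_mod_cast (by omega : a + (r - c) < r + k)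

lemma lower_lt_upper_of_val_eq_succ (P : IsLatticePathPresentation M m g l u)
    (h3 : VerticallyThreeConnected M) (hr : 3 ≤ r) {i j : Fin r} (hij : (j : ℕ) = i + 1) :
    l j < u i := by
  have hl := P.lower_strictMono
  have hu := P.upper_strictMono
  have hi := P.bounds i
  have hj := P.bounds j
  have hlij : l i < l j := hl (Fin.lt_def.2 (by omega))
  have huij : u i < u j := hu (Fin.lt_def.2 (by omega))
  by_contra! hji
  rcases hji.lt_or_eq with hlt | heq
  · refine P.not_verticallyThreeConnected_of_cut (t := l j - 1) (a := i + 1) (c := i + 1)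
      (k := 1) (by omega) (by omega) ?_ ?_ (by omega) (by omega) (by omega) (by omega)
      (by omega) h3
    · refine hl.monotone.le_iff_val_lt (by omega) (fun i' h => ?_) (fun i' h => ?_)
      · obtain rfl : i' = i := Fin.ext (by omega); omega
      · obtain rfl : i' = j := Fin.ext (by omega); omega
    · refine hu.monotone.le_iff_val_lt (by omega) (fun i' h => ?_) (fun i' h => ?_)
      · obtain rfl : i' = i := Fin.ext (by omega); omega
      · obtain rfl : i' = j := Fin.ext (by omega); omega
  by_cases hlast : (i : ℕ) + 2 < r
  · refine P.not_verticallyThreeConnected_of_cut (t := u i) (a := i + 2) (c := i + 1)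
      (k := 2) (by omega) (by omega) ?_ ?_ (by omega) (by omega) (by omega) (by omega)
      (by omega) h3
    · refine hl.monotone.le_iff_val_lt (by omega) (fun i' h => ?_) (fun i' h => ?_)
      · obtain rfl : i' = j := Fin.ext (by omega); omega
      · have := hl (show j < i' from Fin.lt_def.2 (by omega)); omega
    · refine hu.monotone.le_iff_val_lt (by omega) (fun i' h => ?_) (fun i' h => ?_)
      · obtain rfl : i' = i := Fin.ext (by omega); omega
      · obtain rfl : i' = j := Fin.ext (by omega); omega
  -- here `j` is the last interval, and `3 ≤ r` makes the left side of rank `i + 1 ≥ 2`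
  · refine P.not_verticallyThreeConnected_of_cut (t := u i - 1) (a := i + 1) (c := i)
      (k := 2) (by omega) (by omega) ?_ ?_ (by omega) (by omega) (by omega) (by omega)
      (by omega) h3
    · refine hl.monotone.le_iff_val_lt (by omega) (fun i' h => ?_) (fun i' h => ?_)
      · obtain rfl : i' = i := Fin.ext (by omega); omega
      · obtain rfl : i' = j := Fin.ext (by omega); omega
    · refine hu.monotone.le_iff_val_lt (by omega) (fun i' h => ?_) (fun i' h => ?_)
      · have := hu (show i' < i from Fin.lt_def.2 (by omega)); omega
      · obtain rfl : i' = i := Fin.ext (by omega); omega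

lemma lower_le_upper_of_val_eq_add_two (P : IsLatticePathPresentation M m g l u)
    (h3 : VerticallyThreeConnected M) {i k : Fin r} (hik : (k : ℕ) = i + 2) :
    l k ≤ u i := by
  have hl := P.lower_strictMono
  have hu := P.upper_strictMono
  obtain ⟨j, hij⟩ : ∃ j : Fin r, (j : ℕ) = i + 1 := ⟨⟨i + 1, by omega⟩, rfl⟩
  have hi := P.bounds i
  have hj := P.bounds j
  have hk := P.bounds k
  have hlij : l i < l j := hl (Fin.lt_def.2 (by omega))
  have hljk : l j < l k := hl (Fin.lt_def.2 (by omega))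
  have huij : u i < u j := hu (Fin.lt_def.2 (by omega))
  have hujk : u j < u k := hu (Fin.lt_def.2 (by omega))
  by_contra! hki
  have hlk : ∀ i', l i' ≤ l k - 1 ↔ (i' : ℕ) < i + 2 := by
    refine hl.monotone.le_iff_val_lt (by omega) (fun i' h => ?_) (fun i' h => ?_)
    · obtain rfl : i' = j := Fin.ext (by omega); omega
    · obtain rfl : i' = k := Fin.ext (by omega); omega
  by_cases hjk : u j < l k
  · refine P.not_verticallyThreeConnected_of_cut (t := l k - 1) (a := i + 2) (c := i + 2)
      (k := 1) (by omega) (by omega) hlk ?_ (by omega) (by omega) (by omega) (by omega)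
      (by omega) h3
    refine hu.monotone.le_iff_val_lt (by omega) (fun i' h => ?_) (fun i' h => ?_)
    · obtain rfl : i' = j := Fin.ext (by omega); omega
    · obtain rfl : i' = k := Fin.ext (by omega); omega
  · refine P.not_verticallyThreeConnected_of_cut (t := l k - 1) (a := i + 2) (c := i + 1)
      (k := 2) (by omega) (by omega) hlk ?_ (by omega) (by omega) (by omega) (by omega)
      (by omega) h3
    refine hu.monotone.le_iff_val_lt (by omega) (fun i' h => ?_) (fun i' h => ?_)
    · obtain rfl : i' = i := Fin.ext (by omega); omega
    · obtain rfl : i' = j := Fin.ext (by omega); omega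

theorem exists_isMinorOf_isUnifIso (P : IsLatticePathPresentation M m g l u)
    (h3 : VerticallyThreeConnected M) (hr : 3 ≤ r) :
    ∃ N : Matroid α, IsMinorOf N M ∧ IsUnifIso r (r + 2) N := by
  obtain ⟨e, he, heI⟩ := exists_strictMono_mem_Icc (by omega) P.lower_strictMono
    P.upper_strictMono (fun _ _ => P.lower_lt_upper_of_val_eq_succ h3 hr)
    (fun _ _ => P.lower_le_upper_of_val_eq_add_two h3)
  have heE : ∀ s, e s ∈ Icc 1 (m + r) := fun s => by
    obtain ⟨h1, h2⟩ :=
      heI ⟨min s (r - 1), by omega⟩ s (by simp only; omega) (by simp only; omega)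
    have := P.bounds ⟨min s (r - 1), by omega⟩
    exact ⟨by omega, by omega⟩
  refine ⟨M ↾ range (g ∘ e), isMinorOf_restrict ?_, P.presentation.isUnifIso_restrict_range
    (fun s s' h => he.injective (P.injOn (heE s) (heE s') h))
    fun i s his hsi => mem_image_of_mem g (heI i s his hsi)⟩
  rintro _ ⟨s, rfl⟩
  exact P.image_eq ▸ mem_image_of_mem g (heE s)

end IsLatticePathPresentation

/-- A vertically 3-connected lattice path matroid of rank `r ≥ 3` has a minor isomorphic
to the uniform matroid `U_{r, r+2}`. -/
theorem exists_unif_minor_of_verticallyThreeConnected (M : Matroid α) (r : ℕ) (hr : 3 ≤ r)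
    (hrank : eRank₀ M = (r : ℕ∞)) (hlp : LatticePath M)
    (h3 : VerticallyThreeConnected M) :
    ∃ N : Matroid α, IsMinorOf N M ∧ IsUnifIso r (r + 2) N := by
  obtain ⟨r', m, g, l, u, hg, hgE, hl, hu, hbd, hpres⟩ := hlp
  have P : IsLatticePathPresentation M m g l u := ⟨hg, hgE, hl, hu, hbd, hpres⟩
  obtain rfl : r' = r := by exact_mod_cast P.eRank₀_eq.symm.trans hrank
  exact P.exists_isMinorOf_isUnifIso h3 hr
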